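/- (Advantage expression.) Let K be a stabilizing gain and K′ ∈ ℝ^{k×d} arbitrary. For every x ∈ ℝ^d, the advantage at the action u = −K′x equals A_K(x, −K′x) = 2 x^⊤(K′−K)^⊤ E_K x + x^⊤(K′−K)^⊤ (R + B^⊤P_KB) (K′−K) x, where E_K := (R + B^⊤P_KB)K − B^⊤P_KA. -/

import Mathlib

open Matrix

noncomputable section

/-- Spectral radius of a real square matrix: the supremum of the absolute values of its
complex eigenvalues. -/
def specRad {d : ℕ} (M : Matrix (Fin d) (Fin d) ℝ) : ℝ :=
  ⨆ μ : spectrum ℂ (M.map (algebraMap ℝ ℂ)), ‖(μ : ℂ)‖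

theorem Matrix.isHermitian_transpose_mul_self {m n : Type*} [Fintype m] {α : Type*}
    [CommSemiring α] [StarRing α] [TrivialStar α] (A : Matrix m n α) : (Aᵀ * A).IsHermitian := by
  simpa using Matrix.isHermitian_conjTranspose_mul_self A

/-- Minimum singular value of a real matrix. -/
def sigmaMin {m n : ℕ} (M : Matrix (Fin m) (Fin n) ℝ) : ℝ :=
  Real.sqrt (⨅ i, (Matrix.isHermitian_transpose_mul_self M).eigenvalues i)

/-- Spectral norm (maximum singular value) of a real matrix. -/
def specNorm {m n : ℕ} (M : Matrix (Fin m) (Fin n) ℝ) : ℝ :=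
  Real.sqrt (⨆ i, (Matrix.isHermitian_transpose_mul_self M).eigenvalues i)

/-- Frobenius norm of a real matrix. -/
def frobNorm {m n : ℕ} (M : Matrix (Fin m) (Fin n) ℝ) : ℝ :=
  Real.sqrt (∑ i, ∑ j, (M i j) ^ 2)

/-- For a stabilizing gain `K`, the unique positive semidefinite solution `P_K` of
`P = Q + Kᵀ R K + (A - B K)ᵀ P (A - B K)`, given by its convergent series representation. -/
def Pmat {d k : ℕ} (A : Matrix (Fin d) (Fin d) ℝ) (B : Matrix (Fin d) (Fin k) ℝ)
    (Q : Matrix (Fin d) (Fin d) ℝ) (R : Matrix (Fin k) (Fin k) ℝ)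
    (K : Matrix (Fin k) (Fin d) ℝ) : Matrix (Fin d) (Fin d) ℝ :=
  ∑' t : ℕ, ((A - B * K)ᵀ) ^ t * (Q + Kᵀ * R * K) * (A - B * K) ^ t

/-- The state correlation matrix `Σ_K = ∑_{t} (A-BK)^t Σ₀ ((A-BK)ᵀ)^t`. -/
def SigmaMat {d k : ℕ} (A : Matrix (Fin d) (Fin d) ℝ) (B : Matrix (Fin d) (Fin k) ℝ)
    (Sig0 : Matrix (Fin d) (Fin d) ℝ) (K : Matrix (Fin k) (Fin d) ℝ) :
    Matrix (Fin d) (Fin d) ℝ :=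
  ∑' t : ℕ, (A - B * K) ^ t * Sig0 * ((A - B * K)ᵀ) ^ t


open scoped ENNReal NNReal

attribute [local instance] Matrix.linftyOpNormedAddCommGroup Matrix.linftyOpNormedRing
  Matrix.linftyOpNormedAlgebra Matrix.linftyOpNormedSpace


lemma entry_le {d : ℕ} (N : Matrix (Fin d) (Fin d) ℝ) (i j : Fin d) : ‖N i j‖₊ ≤ ‖N‖₊ := by
  rw [Matrix.linfty_opNNNorm_def]
  exact le_trans (Finset.single_le_sum (f := fun c => ‖N i c‖₊) (fun c _ => zero_le)
    (Finset.mem_univ j)) (Finset.le_sup (f := fun i => ∑ j, ‖N i j‖₊) (Finset.mem_univ i))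

lemma transpose_nnnorm_le {d : ℕ} (N : Matrix (Fin d) (Fin d) ℝ) : ‖Nᵀ‖₊ ≤ d * ‖N‖₊ := by
  rw [Matrix.linfty_opNNNorm_def]
  refine Finset.sup_le fun j _ => ?_
  calc ∑ i, ‖Nᵀ j i‖₊ ≤ ∑ _i : Fin d, ‖N‖₊ :=
        Finset.sum_le_sum fun i _ => entry_le N i j
    _ = d * ‖N‖₊ := by simp [mul_comm]

lemma spectralRadius_lt_one {d : ℕ} {L : Matrix (Fin d) (Fin d) ℝ} (h : specRad L < 1) :
    spectralRadius ℂ (L.map (algebraMap ℝ ℂ)) < 1 := by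
  set Lc := L.map (algebraMap ℝ ℂ)
  have hb : BddAbove (Set.range fun μ : spectrum ℂ Lc => ‖(μ : ℂ)‖) := by
    have hc : IsCompact (norm '' spectrum ℂ Lc) :=
      (spectrum.isCompact Lc).image continuous_norm
    have he : (Set.range fun μ : spectrum ℂ Lc => ‖(μ : ℂ)‖)
        = norm '' spectrum ℂ Lc := by
      ext y; simp [Set.mem_image]
    rw [he]
    exact hc.bddAbove
  have hle : spectralRadius ℂ Lc ≤ ENNReal.ofReal (specRad L) := by
    rw [spectralRadius]
    refine iSup₂_le fun z hz => ?_
    have h1 : ‖z‖ ≤ specRad L := le_ciSup hb (⟨z, hz⟩ : spectrum ℂ Lc)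
    have h2 : (‖z‖₊ : ℝ≥0∞) = ENNReal.ofReal ‖z‖ := by
      exact (ofReal_norm z).symm
    rw [h2]
    exact ENNReal.ofReal_le_ofReal h1
  exact lt_of_le_of_lt hle (ENNReal.ofReal_lt_one.mpr h)

lemma norm_map_complex {d : ℕ} (M : Matrix (Fin d) (Fin d) ℝ) :
    ‖M.map (algebraMap ℝ ℂ)‖ = ‖M‖ := by
  have : ‖M.map (algebraMap ℝ ℂ)‖₊ = ‖M‖₊ := by
    simp [Matrix.linfty_opNNNorm_def, Matrix.map_apply]
  exact congrArg NNReal.toReal this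

lemma exists_geom_bound {d : ℕ} {L : Matrix (Fin d) (Fin d) ℝ} (h : specRad L < 1) :
    ∃ ρ : ℝ, 0 ≤ ρ ∧ ρ < 1 ∧ ∀ᶠ n in Filter.atTop, ‖L ^ n‖ ≤ ρ ^ n := by
  set Lc := L.map (algebraMap ℝ ℂ) with hLc
  obtain ⟨r, hr1, hr2⟩ := exists_between (spectralRadius_lt_one h)
  have htend := spectrum.pow_nnnorm_pow_one_div_tendsto_nhds_spectralRadius Lc
  have hev : ∀ᶠ n : ℕ in Filter.atTop, ((‖Lc ^ n‖₊ : ℝ≥0∞)) ^ (1 / (n:ℝ)) < r :=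
    htend.eventually_lt_const hr1
  have hrtop : r ≠ ⊤ := (hr2.trans_le le_top).ne
  refine ⟨r.toReal, ENNReal.toReal_nonneg, ?_, ?_⟩
  · have := ENNReal.toReal_lt_toReal hrtop ENNReal.one_ne_top |>.mpr hr2
    simpa using this
  · filter_upwards [hev, Filter.eventually_ge_atTop 1] with n hn hn1
    have hn0 : (n : ℝ) ≠ 0 := by positivity
    have h3 : (‖Lc ^ n‖₊ : ℝ≥0∞) < r ^ n := by
      have := ENNReal.rpow_lt_rpow hn (by positivity : (0:ℝ) < (n:ℝ))
      rwa [← ENNReal.rpow_mul, one_div_mul_cancel hn0, ENNReal.rpow_one,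
        ENNReal.rpow_natCast] at this
    have h4 : ‖Lc ^ n‖ ≤ r.toReal ^ n := by
      have := ENNReal.toReal_le_toReal (by simp) (by simp [hrtop]) |>.mpr h3.le
      simpa [ENNReal.toReal_pow] using this
    have h5 : Lc ^ n = (L ^ n).map (algebraMap ℝ ℂ) := by
      rw [hLc]
      exact (map_pow (algebraMap ℝ ℂ).mapMatrix L n).symm
    rwa [h5, norm_map_complex] at h4

lemma summable_series {d : ℕ} {L M : Matrix (Fin d) (Fin d) ℝ} (h : specRad L < 1) :
    Summable fun t : ℕ => (Lᵀ) ^ t * M * L ^ t := by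
  obtain ⟨ρ, hρ0, hρ1, hev⟩ := exists_geom_bound h
  refine Summable.of_norm_bounded_eventually_nat (g := fun n => (d * ‖M‖) * (ρ ^ 2) ^ n) ?_ ?_
  · exact (summable_geometric_of_lt_one (by positivity) (by nlinarith)).mul_left _
  · filter_upwards [hev] with n hn
    have ht : (Lᵀ) ^ n = (L ^ n)ᵀ := (Matrix.transpose_pow L n).symm
    calc ‖(Lᵀ) ^ n * M * L ^ n‖ ≤ ‖(Lᵀ) ^ n * M‖ * ‖L ^ n‖ := norm_mul_le _ _
      _ ≤ ‖(Lᵀ) ^ n‖ * ‖M‖ * ‖L ^ n‖ := by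
          exact mul_le_mul_of_nonneg_right (norm_mul_le _ _) (norm_nonneg _)
      _ ≤ (d * ‖L ^ n‖) * ‖M‖ * ‖L ^ n‖ := by
          refine mul_le_mul_of_nonneg_right (mul_le_mul_of_nonneg_right ?_ (norm_nonneg _))
            (norm_nonneg _)
          rw [ht]
          exact_mod_cast NNReal.coe_le_coe.mpr (transpose_nnnorm_le (L ^ n))
      _ = (d * ‖M‖) * (‖L ^ n‖ * ‖L ^ n‖) := by ring
      _ ≤ (d * ‖M‖) * (ρ ^ n * ρ ^ n) := by
          have h0 : (0:ℝ) ≤ ‖L ^ n‖ := norm_nonneg _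
          have : ‖L ^ n‖ * ‖L ^ n‖ ≤ ρ ^ n * ρ ^ n :=
            mul_le_mul hn hn h0 (pow_nonneg hρ0 n)
          exact mul_le_mul_of_nonneg_left this (by positivity)
      _ = (d * ‖M‖) * (ρ ^ 2) ^ n := by ring

def sandwichHom {d : ℕ} (L : Matrix (Fin d) (Fin d) ℝ) :
    Matrix (Fin d) (Fin d) ℝ →+ Matrix (Fin d) (Fin d) ℝ :=
  AddMonoidHom.mk' (fun X => Lᵀ * X * L) (fun X Y => by simp only [mul_add, add_mul])

lemma continuous_sandwich {d : ℕ} (L : Matrix (Fin d) (Fin d) ℝ) :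
    Continuous ⇑(sandwichHom L) :=
  (continuous_const.mul continuous_id).mul continuous_const

lemma continuous_transpose {d : ℕ} :
    Continuous fun X : Matrix (Fin d) (Fin d) ℝ => Xᵀ := by
  refine (LipschitzWith.of_dist_le_mul (K := d) fun X Y => ?_).continuous
  rw [dist_eq_norm, dist_eq_norm, ← Matrix.transpose_sub]
  exact_mod_cast NNReal.coe_le_coe.mpr (transpose_nnnorm_le (X - Y))

lemma tsum_fixed {d : ℕ} (L M : Matrix (Fin d) (Fin d) ℝ)
    (hs : Summable fun t : ℕ => Lᵀ ^ t * M * L ^ t) :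
    (∑' t : ℕ, Lᵀ ^ t * M * L ^ t)
      = M + Lᵀ * (∑' t : ℕ, Lᵀ ^ t * M * L ^ t) * L := by
  have hco : (⇑(sandwichHom L) ∘ fun t : ℕ => Lᵀ ^ t * M * L ^ t)
      = fun t : ℕ => Lᵀ * (Lᵀ ^ t * M * L ^ t) * L := rfl
  have key : (∑' t : ℕ, Lᵀ * (Lᵀ ^ t * M * L ^ t) * L)
      = Lᵀ * (∑' t : ℕ, Lᵀ ^ t * M * L ^ t) * L := by
    have h := (hs.hasSum.map (sandwichHom L) (continuous_sandwich L)).tsum_eq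
    rw [hco] at h
    exact h
  have h2 : ∀ t : ℕ, Lᵀ ^ (t+1) * M * L ^ (t+1) = Lᵀ * (Lᵀ ^ t * M * L ^ t) * L := by
    intro t; rw [pow_succ L, pow_succ' Lᵀ]; simp only [mul_assoc]
  conv_lhs => rw [hs.tsum_eq_zero_add]
  rw [tsum_congr h2, key, pow_zero, pow_zero, one_mul, mul_one]

lemma tsum_symm {d : ℕ} (L M : Matrix (Fin d) (Fin d) ℝ) (hMs : Mᵀ = M)
    (hs : Summable fun t : ℕ => Lᵀ ^ t * M * L ^ t) :
    (∑' t : ℕ, Lᵀ ^ t * M * L ^ t)ᵀ = ∑' t : ℕ, Lᵀ ^ t * M * L ^ t := by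
  have h1 : (∑' t : ℕ, Lᵀ ^ t * M * L ^ t)ᵀ
      = ∑' t : ℕ, (Lᵀ ^ t * M * L ^ t)ᵀ :=
    ((hs.hasSum.map (Matrix.transposeAddEquiv (Fin d) (Fin d) ℝ).toAddMonoidHom
      continuous_transpose).tsum_eq).symm
  rw [h1]
  exact tsum_congr fun t => by
    simp [Matrix.transpose_mul, Matrix.transpose_pow, hMs, mul_assoc]

lemma riccati {d k : ℕ} (A : Matrix (Fin d) (Fin d) ℝ) (B : Matrix (Fin d) (Fin k) ℝ)
    (Q : Matrix (Fin d) (Fin d) ℝ) (R : Matrix (Fin k) (Fin k) ℝ)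
    (K : Matrix (Fin k) (Fin d) ℝ) (hK : specRad (A - B * K) < 1) :
    Pmat A B Q R K = (Q + Kᵀ * R * K)
      + (A - B * K)ᵀ * Pmat A B Q R K * (A - B * K) :=
  tsum_fixed (A - B * K) (Q + Kᵀ * R * K) (summable_series hK)

lemma Pmat_symm {d k : ℕ} (A : Matrix (Fin d) (Fin d) ℝ) (B : Matrix (Fin d) (Fin k) ℝ)
    (Q : Matrix (Fin d) (Fin d) ℝ) (R : Matrix (Fin k) (Fin k) ℝ) (hQ : Qᵀ = Q) (hR : Rᵀ = R)
    (K : Matrix (Fin k) (Fin d) ℝ) (hK : specRad (A - B * K) < 1) :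
    (Pmat A B Q R K)ᵀ = Pmat A B Q R K := by
  refine tsum_symm (A - B * K) (Q + Kᵀ * R * K) ?_ (summable_series hK)
  simp [Matrix.transpose_add, Matrix.transpose_mul, hQ, hR, mul_assoc]
  rw [Matrix.mul_assoc]

lemma transpose_qf {d : ℕ} (M : Matrix (Fin d) (Fin d) ℝ) (x : Fin d → ℝ) :
    x ⬝ᵥ Mᵀ.mulVec x = x ⬝ᵥ M.mulVec x := by
  rw [Matrix.dotProduct_mulVec, Matrix.vecMul_transpose, dotProduct_comm]

lemma sandwich_qf {a d : ℕ} (N : Matrix (Fin a) (Fin d) ℝ) (M : Matrix (Fin a) (Fin a) ℝ)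
    (x : Fin d → ℝ) :
    x ⬝ᵥ (Nᵀ * M * N).mulVec x = (N.mulVec x) ⬝ᵥ M.mulVec (N.mulVec x) := by
  rw [← Matrix.mulVec_mulVec, ← Matrix.mulVec_mulVec, Matrix.dotProduct_mulVec,
    Matrix.vecMul_transpose]

/-- The LQR cost `C(K) = Tr(Σ₀ P_K)`. -/
def Cost {d k : ℕ} (A : Matrix (Fin d) (Fin d) ℝ) (B : Matrix (Fin d) (Fin k) ℝ)
    (Q : Matrix (Fin d) (Fin d) ℝ) (R : Matrix (Fin k) (Fin k) ℝ)
    (Sig0 : Matrix (Fin d) (Fin d) ℝ) (K : Matrix (Fin k) (Fin d) ℝ) : ℝ :=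
  (Sig0 * Pmat A B Q R K).trace

/-- `E_K = (R + Bᵀ P_K B) K - Bᵀ P_K A`. -/
def Emat {d k : ℕ} (A : Matrix (Fin d) (Fin d) ℝ) (B : Matrix (Fin d) (Fin k) ℝ)
    (Q : Matrix (Fin d) (Fin d) ℝ) (R : Matrix (Fin k) (Fin k) ℝ)
    (K : Matrix (Fin k) (Fin d) ℝ) : Matrix (Fin k) (Fin d) ℝ :=
  (R + Bᵀ * Pmat A B Q R K * B) * K - Bᵀ * Pmat A B Q R K * A

/-- The value function `V_K(x) = xᵀ P_K x`. -/
def Vval {d k : ℕ} (A : Matrix (Fin d) (Fin d) ℝ) (B : Matrix (Fin d) (Fin k) ℝ)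
    (Q : Matrix (Fin d) (Fin d) ℝ) (R : Matrix (Fin k) (Fin k) ℝ)
    (K : Matrix (Fin k) (Fin d) ℝ) (x : Fin d → ℝ) : ℝ :=
  x ⬝ᵥ (Pmat A B Q R K).mulVec x

/-- The state-action value `Q_K(x,u) = xᵀQx + uᵀRu + V_K(Ax + Bu)`. -/
def Qval {d k : ℕ} (A : Matrix (Fin d) (Fin d) ℝ) (B : Matrix (Fin d) (Fin k) ℝ)
    (Q : Matrix (Fin d) (Fin d) ℝ) (R : Matrix (Fin k) (Fin k) ℝ)
    (K : Matrix (Fin k) (Fin d) ℝ) (x : Fin d → ℝ) (u : Fin k → ℝ) : ℝ :=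
  x ⬝ᵥ Q.mulVec x + u ⬝ᵥ R.mulVec u + Vval A B Q R K (A.mulVec x + B.mulVec u)

/-- The advantage `A_K(x,u) = Q_K(x,u) - V_K(x)`. -/
def Adv {d k : ℕ} (A : Matrix (Fin d) (Fin d) ℝ) (B : Matrix (Fin d) (Fin k) ℝ)
    (Q : Matrix (Fin d) (Fin d) ℝ) (R : Matrix (Fin k) (Fin k) ℝ)
    (K : Matrix (Fin k) (Fin d) ℝ) (x : Fin d → ℝ) (u : Fin k → ℝ) : ℝ :=
  Qval A B Q R K x u - Vval A B Q R K x

/-- Advantage expression. -/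
theorem advantage_expression {d k : ℕ}
    (A : Matrix (Fin d) (Fin d) ℝ) (B : Matrix (Fin d) (Fin k) ℝ)
    (Q : Matrix (Fin d) (Fin d) ℝ) (R : Matrix (Fin k) (Fin k) ℝ)
    (hQ : Q.PosDef) (hR : R.PosDef)
    (K : Matrix (Fin k) (Fin d) ℝ) (hK : specRad (A - B * K) < 1)
    (K' : Matrix (Fin k) (Fin d) ℝ) (x : Fin d → ℝ) :
    Adv A B Q R K x (-(K'.mulVec x)) =
      2 * (x ⬝ᵥ ((K' - K)ᵀ * Emat A B Q R K).mulVec x) +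
        x ⬝ᵥ ((K' - K)ᵀ * (R + Bᵀ * Pmat A B Q R K * B) * (K' - K)).mulVec x := by
  have hQs : Qᵀ = Q := by
    rw [← Matrix.conjTranspose_eq_transpose_of_trivial]; exact hQ.1
  have hRs : Rᵀ = R := by
    rw [← Matrix.conjTranspose_eq_transpose_of_trivial]; exact hR.1
  have hRic := riccati A B Q R K hK
  have hPs := Pmat_symm A B Q R hQs hRs K hK
  set P := Pmat A B Q R K with hP
  have hE : Emat A B Q R K = (R + Bᵀ * P * B) * K - Bᵀ * P * A := rfl
  have key : Q + K'ᵀ * R * K' + (A - B * K')ᵀ * P * (A - B * K') - P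
      = (K' - K)ᵀ * ((R + Bᵀ * P * B) * K - Bᵀ * P * A)
        + ((R + Bᵀ * P * B) * K - Bᵀ * P * A)ᵀ * (K' - K)
        + (K' - K)ᵀ * (R + Bᵀ * P * B) * (K' - K) := by
    nth_rewrite 2 [hRic]
    simp only [Matrix.transpose_sub, Matrix.transpose_add, Matrix.transpose_mul,
      Matrix.transpose_transpose, hPs, hRs]
    simp only [Matrix.mul_add, Matrix.add_mul, Matrix.mul_sub, Matrix.sub_mul, Matrix.mul_assoc]
    abel
  simp only [Adv, Qval, Vval, ← hP]
  have hu : A.mulVec x + B.mulVec (-(K'.mulVec x)) = (A - B * K').mulVec x := by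
    simp [Matrix.mulVec_neg, Matrix.mulVec_mulVec, Matrix.sub_mulVec, Matrix.add_mulVec,
      Matrix.neg_mulVec, sub_eq_add_neg]
  rw [hu]
  have h1 : (-(K'.mulVec x)) ⬝ᵥ R.mulVec (-(K'.mulVec x))
      = x ⬝ᵥ (K'ᵀ * R * K').mulVec x := by
    rw [sandwich_qf]
    simp [Matrix.mulVec_neg, neg_dotProduct, dotProduct_neg,
      Matrix.mulVec_mulVec]
  rw [h1]
  have h2 : ((A - B * K').mulVec x) ⬝ᵥ P.mulVec ((A - B * K').mulVec x)
      = x ⬝ᵥ ((A - B * K')ᵀ * P * (A - B * K')).mulVec x := (sandwich_qf _ _ _).symm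
  rw [h2, hE, two_mul]
  have h3 : x ⬝ᵥ ((K' - K)ᵀ * ((R + Bᵀ * P * B) * K - Bᵀ * P * A)).mulVec x
      = x ⬝ᵥ (((R + Bᵀ * P * B) * K - Bᵀ * P * A)ᵀ * (K' - K)).mulVec x := by
    rw [← transpose_qf, Matrix.transpose_mul, Matrix.transpose_transpose]
  nth_rewrite 2 [h3]
  have h5 := congrArg (fun G => x ⬝ᵥ G.mulVec x) key
  simp only [Matrix.add_mulVec, Matrix.sub_mulVec, dotProduct_add, dotProduct_sub] at h5
  linarith [h5]
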